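/- arXiv:2510.13564 — 2 statements merged into one kernel-verified Lean document; each statement's English description precedes it below -/
import Mathlib

section
/- For any metric space X, the singular simplicial space Sing_•(X), with Sing_n(X) = Map(Δ^n_Top, X) equipped with the compact-open topology, is a good simplicial space: each degeneracy map s_i : Sing_n(X) → Sing_{n+1}(X) is a closed Hurewicz cofibration. -/
open scoped unitInterval

/-- A closed Hurewicz cofibration: a closed embedding satisfying the homotopy extension
property with respect to all spaces. -/
def IsClosedHurewiczCofibration {A X : Type} [TopologicalSpace A] [TopologicalSpace X]
    (f : C(A, X)) : Prop :=
  Topology.IsClosedEmbedding f ∧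
    ∀ (Z : Type) (_ : TopologicalSpace Z) (g : C(X, Z)) (H : C(A × I, Z)),
      (∀ a, H (a, 0) = g (f a)) →
      ∃ G : C(X × I, Z), (∀ x, G (x, 0) = g x) ∧ ∀ a t, G (f a, t) = H (a, t)

/-- The affine map of standard simplices induced by a map of index sets. -/
def simplexMap {m n : ℕ} (f : Fin m → Fin n) :
    C(stdSimplex ℝ (Fin m), stdSimplex ℝ (Fin n)) where
  toFun x := ⟨fun j => ∑ k, if f k = j then x.1 k else 0, by
    constructor
    · intro j
      exact Finset.sum_nonneg fun k _ => by
        by_cases h : f k = j <;> simp [h, x.2.1 k]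
    · rw [Finset.sum_comm]
      calc ∑ k, ∑ j, (if f k = j then x.1 k else 0)
          = ∑ k, x.1 k := by
            refine Finset.sum_congr rfl fun k _ => ?_
            rw [Finset.sum_ite_eq (Finset.univ) (f k) (fun _ => x.1 k)]
            simp
        _ = 1 := x.2.2⟩
  continuous_toFun := by
    apply Continuous.subtype_mk
    apply continuous_pi
    intro j
    refine continuous_finset_sum _ fun k _ => ?_
    by_cases h : f k = j
    · simp only [if_pos h]
      exact (continuous_apply k).comp continuous_subtype_val
    · simpa [h] using continuous_const


/-- The singular simplicial space of `X`: `Sing_n(X) = C(Δⁿ, X)` with the compact-open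
topology.  Its `i`-th degeneracy is precomposition with the codegeneracy
`σ^i : Δ^{n+1} → Δ^n`. -/
def singDegeneracy (X : Type) [TopologicalSpace X] (n : ℕ) (i : Fin (n + 1)) :
    C(C(stdSimplex ℝ (Fin (n + 1)), X), C(stdSimplex ℝ (Fin (n + 2)), X)) :=
  ⟨fun g => g.comp (simplexMap (Fin.predAbove i)),
    ContinuousMap.continuous_precomp (simplexMap (Fin.predAbove i))⟩

namespace Stmt10Aux

lemma simplexMap_coord {m n : ℕ} (f : Fin m → Fin n) (x : stdSimplex ℝ (Fin m)) (j : Fin n) :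
    (simplexMap f x).1 j = ∑ k, if f k = j then x.1 k else 0 := rfl

lemma simplexMap_comp {l m n : ℕ} (g : Fin l → Fin m) (f : Fin m → Fin n)
    (x : stdSimplex ℝ (Fin l)) :
    simplexMap f (simplexMap g x) = simplexMap (f ∘ g) x := by
  apply Subtype.ext
  funext j
  show (∑ k, if f k = j then (∑ a, if g a = k then x.1 a else 0) else 0)
      = ∑ a, if f (g a) = j then x.1 a else 0
  have h1 : ∀ k : Fin m, (if f k = j then (∑ a, if g a = k then x.1 a else 0) else 0)
      = ∑ a, if g a = k then (if f k = j then x.1 a else 0) else 0 := by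
    intro k
    by_cases h : f k = j <;> simp [h]
  rw [Finset.sum_congr rfl fun k _ => h1 k, Finset.sum_comm]
  refine Finset.sum_congr rfl fun a _ => ?_
  rw [Finset.sum_ite_eq Finset.univ (g a) (fun k => if f k = j then x.1 a else 0)]
  simp

lemma simplexMap_id {m : ℕ} (x : stdSimplex ℝ (Fin m)) : simplexMap (id : Fin m → Fin m) x = x := by
  apply Subtype.ext
  funext j
  show (∑ k, if k = j then x.1 k else 0) = x.1 j
  rw [Finset.sum_ite_eq' Finset.univ j x.1]
  simp

variable {n : ℕ}

/-- The codegeneracy map `σ^i : Δ^{n+1} → Δ^n`. -/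
def σm (i : Fin (n + 1)) : C(stdSimplex ℝ (Fin (n + 2)), stdSimplex ℝ (Fin (n + 1))) :=
  simplexMap (Fin.predAbove i)

/-- A coface section of the codegeneracy. -/
def δm (i : Fin (n + 1)) : C(stdSimplex ℝ (Fin (n + 1)), stdSimplex ℝ (Fin (n + 2))) :=
  simplexMap (Fin.succAbove i.castSucc)

lemma σδ (i : Fin (n + 1)) (y : stdSimplex ℝ (Fin (n + 1))) : σm i (δm i y) = y := by
  show simplexMap (Fin.predAbove i) (simplexMap (Fin.succAbove i.castSucc) y) = y
  rw [simplexMap_comp]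
  have h : (Fin.predAbove i) ∘ (Fin.succAbove i.castSucc) = id := by
    funext k
    exact Fin.predAbove_succAbove i k
  rw [h, simplexMap_id]

lemma sum_ite_linear {m : ℕ} (c : Fin m → Prop) [DecidablePred c] (a b : ℝ)
    (u v : Fin m → ℝ) :
    ∑ k, (if c k then a * u k + b * v k else 0)
      = a * (∑ k, if c k then u k else 0) + b * (∑ k, if c k then v k else 0) := by
  rw [Finset.mul_sum, Finset.mul_sum, ← Finset.sum_add_distrib]
  refine Finset.sum_congr rfl fun k _ => ?_
  by_cases h : c k <;> simp [h]

/-- The straight-line homotopy on `Δ^{n+1}` from the identity to `δ ∘ σ`. -/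
def Ht (i : Fin (n + 1)) : C(I × stdSimplex ℝ (Fin (n + 2)), stdSimplex ℝ (Fin (n + 2))) where
  toFun sp := ⟨(1 - (sp.1 : ℝ)) • (sp.2 : Fin (n + 2) → ℝ)
      + (sp.1 : ℝ) • ((δm i (σm i sp.2) : stdSimplex ℝ (Fin (n + 2))) : Fin (n + 2) → ℝ),
    convex_stdSimplex ℝ (Fin (n + 2)) sp.2.2 (δm i (σm i sp.2)).2
      (by linarith [sp.1.2.2]) sp.1.2.1 (by ring)⟩
  continuous_toFun := by
    apply Continuous.subtype_mk
    have hs : Continuous fun sp : I × stdSimplex ℝ (Fin (n + 2)) => (sp.1 : ℝ) :=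
      continuous_subtype_val.comp continuous_fst
    have hq : Continuous fun sp : I × stdSimplex ℝ (Fin (n + 2)) =>
        ((δm i (σm i sp.2) : stdSimplex ℝ (Fin (n + 2))) : Fin (n + 2) → ℝ) :=
      continuous_subtype_val.comp
        ((δm i).continuous.comp ((σm i).continuous.comp continuous_snd))
    exact ((continuous_const.sub hs).smul (continuous_subtype_val.comp continuous_snd)).add
      (hs.smul hq)

lemma Ht_coord (i : Fin (n + 1)) (s : I) (p : stdSimplex ℝ (Fin (n + 2))) (k : Fin (n + 2)) :
    (Ht i (s, p)).1 k
      = (1 - (s : ℝ)) * p.1 k + (s : ℝ) * (δm i (σm i p)).1 k := by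
  show ((1 - (s : ℝ)) • (p : Fin (n + 2) → ℝ)
      + (s : ℝ) • ((δm i (σm i p) : stdSimplex ℝ (Fin (n + 2))) : Fin (n + 2) → ℝ)) k
      = _
  simp [smul_eq_mul]
  rfl

lemma Ht_zero (i : Fin (n + 1)) (p : stdSimplex ℝ (Fin (n + 2))) : Ht i (0, p) = p := by
  apply Subtype.ext
  funext k
  rw [Ht_coord]
  simp

lemma Ht_one (i : Fin (n + 1)) (p : stdSimplex ℝ (Fin (n + 2))) :
    Ht i (1, p) = δm i (σm i p) := by
  apply Subtype.ext
  funext k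
  rw [Ht_coord]
  simp

lemma σ_Ht (i : Fin (n + 1)) (s : I) (p : stdSimplex ℝ (Fin (n + 2))) :
    σm i (Ht i (s, p)) = σm i p := by
  apply Subtype.ext
  funext j
  have h : (σm i (Ht i (s, p))).1 j
      = (1 - (s : ℝ)) * (σm i p).1 j + (s : ℝ) * (σm i (δm i (σm i p))).1 j := by
    show (∑ k, if Fin.predAbove i k = j then (Ht i (s, p)).1 k else 0) = _
    have : ∀ k, (if Fin.predAbove i k = j then (Ht i (s, p)).1 k else 0)
        = (if Fin.predAbove i k = j then
            (1 - (s : ℝ)) * p.1 k + (s : ℝ) * (δm i (σm i p)).1 k else 0) := by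
      intro k
      rw [Ht_coord]
    rw [Finset.sum_congr rfl fun k _ => this k, sum_ite_linear]
    rfl
  rw [σδ] at h
  show (σm i (Ht i (s, p))).1 j = (σm i p).1 j
  rw [h]
  ring

/-- Abstract homotopy extension lemma: a map `f : B → Y` into a metric space, with a
retraction `r` and a strong deformation `D` of `Y` onto the image of `f`, which is
uniformly `1`-Lipschitz in the `Y`-variable, satisfies the homotopy extension property. -/
lemma hep_aux {B Y : Type} [TopologicalSpace B] [MetricSpace Y]
    (f : C(B, Y)) (r : C(Y, B)) (hr : ∀ a, r (f a) = a)
    (D : C(Y × I, Y)) (hD0 : ∀ x, D (x, 0) = x) (hD1 : ∀ x, D (x, 1) = f (r x))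
    (hDA : ∀ x, x = f (r x) → ∀ s, D (x, s) = x)
    (hDlip : ∀ x y s, dist (D (x, s)) (D (y, s)) ≤ dist x y) :
    ∀ (Z : Type) (_ : TopologicalSpace Z) (g : C(Y, Z)) (H : C(B × I, Z)),
      (∀ a, H (a, 0) = g (f a)) →
      ∃ G : C(Y × I, Z), (∀ x, G (x, 0) = g x) ∧ ∀ a t, G (f a, t) = H (a, t) := by
  intro Z _ g H hH
  classical
  set u : Y → ℝ := fun x => dist x (f (r x)) with hu_def
  have hu_cont : Continuous u :=
    continuous_id.dist (f.continuous.comp r.continuous)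
  have hu0 : ∀ x, u x = 0 → x = f (r x) := fun x hx => dist_eq_zero.mp hx
  have huf : ∀ a, u (f a) = 0 := by
    intro a
    simp only [hu_def, hr a, dist_self]
  set pr : ℝ → I := Set.projIcc 0 1 zero_le_one with hpr_def
  set F₁ : Y × I → Z := fun p => g (D (p.1, pr ((p.2 : ℝ) / u p.1))) with hF₁_def
  set F₂ : Y × I → Z := fun p => H (r p.1, pr ((p.2 : ℝ) - u p.1)) with hF₂_def
  have hF₁ : Continuous F₁ := by
    rw [continuous_iff_continuousAt]
    rintro ⟨x₀, t₀⟩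
    by_cases h0 : u x₀ = 0
    · -- near a point of the image, use the Lipschitz bound
      have hx₀ : x₀ = f (r x₀) := hu0 x₀ h0
      have hDx₀ : ∀ s, D (x₀, s) = x₀ := hDA x₀ hx₀
      have hval : F₁ (x₀, t₀) = g x₀ := by
        simp only [hF₁_def, hDx₀]
      intro V hV
      rw [hval] at hV
      have hgV : g ⁻¹' V ∈ nhds x₀ := g.continuous.continuousAt hV
      obtain ⟨ε, hε, hball⟩ := Metric.mem_nhds_iff.mp hgV
      rw [Filter.mem_map]
      refine Filter.mem_of_superset
        (prod_mem_nhds (Metric.ball_mem_nhds x₀ hε) Filter.univ_mem) ?_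
      rintro ⟨x, t⟩ ⟨hx, -⟩
      have hd : dist (D (x, pr ((t : ℝ) / u x))) x₀ < ε := by
        calc dist (D (x, pr ((t : ℝ) / u x))) x₀
            = dist (D (x, pr ((t : ℝ) / u x))) (D (x₀, pr ((t : ℝ) / u x))) := by
              rw [hDx₀]
          _ ≤ dist x x₀ := hDlip _ _ _
          _ < ε := hx
      exact hball hd
    · -- away from the image everything is a composition of continuous maps
      have hdiv : ContinuousAt (fun p : Y × I => (p.2 : ℝ) / u p.1) (x₀, t₀) :=
        ((continuous_subtype_val.comp continuous_snd).continuousAt).div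
          ((hu_cont.comp continuous_fst).continuousAt) h0
      have harg : ContinuousAt (fun p : Y × I => (p.1, pr ((p.2 : ℝ) / u p.1))) (x₀, t₀) :=
        continuousAt_fst.prodMk (continuous_projIcc.continuousAt.comp hdiv)
      exact (g.continuous.continuousAt).comp ((D.continuous.continuousAt).comp harg)
  have hF₂ : Continuous F₂ :=
    H.continuous.comp ((r.continuous.comp continuous_fst).prodMk
      (continuous_projIcc.comp
        ((continuous_subtype_val.comp continuous_snd).sub (hu_cont.comp continuous_fst))))
  have hpr0 : pr 0 = 0 := by
    rw [hpr_def]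
    exact Set.projIcc_left zero_le_one
  have hpr1 : pr 1 = 1 := by
    rw [hpr_def]
    exact Set.projIcc_right zero_le_one
  have hmid : ∀ p : Y × I, ((p.2 : ℝ)) = u p.1 → F₁ p = F₂ p := by
    rintro ⟨x, t⟩ ht
    show g (D (x, pr ((t : ℝ) / u x))) = H (r x, pr ((t : ℝ) - u x))
    by_cases h0 : u x = 0
    · have ht0 : (t : ℝ) = 0 := by rw [ht, h0]
      have hx : x = f (r x) := hu0 x h0
      rw [ht0, h0, div_zero, sub_zero, hpr0, hD0, hH, ← hx]
    · have hdiv1 : (t : ℝ) / u x = 1 := by rw [ht]; exact div_self h0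
      have hsub0 : (t : ℝ) - u x = 0 := by rw [ht]; ring
      rw [hdiv1, hsub0, hpr1, hpr0, hD1, hH]
  set G0 : Y × I → Z := fun p => if (p.2 : ℝ) ≤ u p.1 then F₁ p else F₂ p with hG0_def
  have hGc : Continuous G0 :=
    Continuous.if_le hF₁ hF₂ (continuous_subtype_val.comp continuous_snd)
      (hu_cont.comp continuous_fst) hmid
  refine ⟨⟨G0, hGc⟩, ?_, ?_⟩
  · intro x
    have h0le : ((0 : I) : ℝ) ≤ u x := by
      simp only [Set.Icc.coe_zero]
      exact dist_nonneg
    show (if ((0 : I) : ℝ) ≤ u x then F₁ (x, 0) else F₂ (x, 0)) = g x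
    rw [if_pos h0le]
    show g (D (x, pr (((0 : I) : ℝ) / u x))) = g x
    rw [show ((0 : I) : ℝ) = 0 from rfl, zero_div, hpr0, hD0]
  · intro a t
    show (if (t : ℝ) ≤ u (f a) then F₁ (f a, t) else F₂ (f a, t)) = H (a, t)
    by_cases hc : (t : ℝ) ≤ u (f a)
    · have ht0 : (t : ℝ) = 0 := le_antisymm (by rw [huf a] at hc; exact hc) t.2.1
      have ht : t = 0 := Subtype.ext ht0
      rw [if_pos hc]
      show g (D (f a, pr ((t : ℝ) / u (f a)))) = H (a, t)
      rw [ht0, zero_div, hpr0, hD0, ht, hH]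
    · rw [if_neg hc]
      show H (r (f a), pr ((t : ℝ) - u (f a))) = H (a, t)
      have hprt : pr ((t : ℝ)) = t := Set.projIcc_val zero_le_one t
      rw [huf a, sub_zero, hr a, hprt]

end Stmt10Aux

open Stmt10Aux in
/-- For any metric space `X`, the singular simplicial space `Sing_•(X)` is good: every
degeneracy map is a closed Hurewicz cofibration. -/
theorem stmt10 (X : Type) [MetricSpace X] (n : ℕ) (i : Fin (n + 1)) :
    IsClosedHurewiczCofibration (singDegeneracy X n i) := by
  classical
  set f := singDegeneracy X n i with hf_def
  let r : C(C(stdSimplex ℝ (Fin (n + 2)), X), C(stdSimplex ℝ (Fin (n + 1)), X)) :=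
    ⟨fun h => h.comp (δm i), ContinuousMap.continuous_precomp (δm i)⟩
  have hfa : ∀ a, f a = a.comp (σm i) := fun a => rfl
  have hr : ∀ a, r (f a) = a := by
    intro a
    ext p
    show a ((σm i) ((δm i) p)) = a p
    rw [σδ]
  constructor
  · exact Function.LeftInverse.isClosedEmbedding hr r.continuous f.continuous
  · -- homotopy extension property
    have hD_cont : Continuous fun xs : C(stdSimplex ℝ (Fin (n + 2)), X) × I =>
        xs.1.comp ((Ht i).curry xs.2) := by
      have h1 : Continuous fun xs : C(stdSimplex ℝ (Fin (n + 2)), X) × I =>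
          (((Ht i).curry xs.2 : C(stdSimplex ℝ (Fin (n + 2)), stdSimplex ℝ (Fin (n + 2)))),
            xs.1) :=
        (((Ht i).curry.continuous).comp continuous_snd).prodMk continuous_fst
      exact ContinuousMap.continuous_comp'.comp h1
    let D : C(C(stdSimplex ℝ (Fin (n + 2)), X) × I, C(stdSimplex ℝ (Fin (n + 2)), X)) :=
      ⟨fun xs => xs.1.comp ((Ht i).curry xs.2), hD_cont⟩
    have hD_apply : ∀ x s p, D (x, s) p = x (Ht i (s, p)) := by
      intro x s p
      show x ((Ht i).curry s p) = x (Ht i (s, p))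
      rw [ContinuousMap.curry_apply]
    have hD0 : ∀ x, D (x, 0) = x := by
      intro x
      ext p
      rw [hD_apply, Ht_zero]
    have hD1 : ∀ x, D (x, 1) = f (r x) := by
      intro x
      ext p
      rw [hD_apply, Ht_one]
      rfl
    have hDA : ∀ x, x = f (r x) → ∀ s, D (x, s) = x := by
      intro x hx s
      ext p
      rw [hD_apply]
      conv_lhs => rw [hx]
      conv_rhs => rw [hx]
      show x ((δm i) ((σm i) (Ht i (s, p)))) = x ((δm i) ((σm i) p))
      rw [σ_Ht]
    have hDlip : ∀ x y s, dist (D (x, s)) (D (y, s)) ≤ dist x y := by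
      intro x y s
      rw [ContinuousMap.dist_le dist_nonneg]
      intro p
      rw [hD_apply, hD_apply]
      exact ContinuousMap.dist_apply_le_dist _
    exact hep_aux f r hr D hD0 hD1 hDA hDlip
end

section
/- Let 𝒞_N be the topological category whose objects are pairs (x, t) with x an unordered configuration of n points in I^N (for some n) and t ∈ ℝ, and whose morphisms from (x, t_x) to (y, t_y) with t_x ≤ t_y are continuous paths z : [t_x, t_y] → UConf(n, I^N) with z(t_x) = x, z(t_y) = y (graphs of paths of configurations). Then 𝒞_N is well-pointed: (Mor(𝒞_N), Ob(𝒞_N)) is an NDR-pair over Ob(𝒞_N) × Ob(𝒞_N), and hence the nerve of 𝒞_N is a good simplicial space. -/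
open scoped unitInterval


noncomputable section

/-- The map induced on homotopy groups by a continuous map. -/
def homotopyGroupMap (N : Type) {X Y : Type} [TopologicalSpace X] [TopologicalSpace Y]
    (f : C(X, Y)) (x : X) : HomotopyGroup N X x → HomotopyGroup N Y (f x) :=
  Quotient.map
    (fun p => (⟨f.comp p.1, fun y hy => by
        simp only [ContinuousMap.comp_apply]
        rw [p.2 y hy]⟩ : GenLoop N Y (f x)))
    (fun p q h => h.map fun H => H.compContinuousMap f)

/-- A space is weakly contractible if it is nonempty and all its homotopy groups
(including `π₀`) are trivial at every basepoint. -/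
def WeaklyContractible (X : Type) [TopologicalSpace X] : Prop :=
  Nonempty X ∧ ∀ (n : ℕ) (x : X), Subsingleton (HomotopyGroup (Fin n) X x)

/-- A continuous map is a weak homotopy equivalence if it induces bijections on all
homotopy groups (including `π₀`) at all basepoints. -/
def IsWeakHomotopyEquiv {X Y : Type} [TopologicalSpace X] [TopologicalSpace Y]
    (f : C(X, Y)) : Prop :=
  (Nonempty Y → Nonempty X) ∧
    ∀ (n : ℕ) (x : X), Function.Bijective (homotopyGroupMap (Fin n) f x)

/-- `f` is an `n`-connected map: it induces isomorphisms on homotopy groups in degrees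
below `n` and a surjection in degree `n`, at all basepoints. -/
def IsNConnectedMap {X Y : Type} [TopologicalSpace X] [TopologicalSpace Y]
    (n : ℕ) (f : C(X, Y)) : Prop :=
  (Nonempty Y → Nonempty X) ∧
    (∀ (i : ℕ) (x : X), i < n → Function.Bijective (homotopyGroupMap (Fin i) f x)) ∧
    ∀ x : X, Function.Surjective (homotopyGroupMap (Fin n) f x)

/-- Two spaces are weakly (homotopy) equivalent if they are connected by a zigzag of weak
homotopy equivalences. -/
def WeaklyEquivalent (X Y : Type) [TopologicalSpace X] [TopologicalSpace Y] : Prop :=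
  ∃ (Z : Type) (_ : TopologicalSpace Z) (f : C(Z, X)) (g : C(Z, Y)),
    IsWeakHomotopyEquiv f ∧ IsWeakHomotopyEquiv g

/-- `ℝ^∞`: the space of finitely supported sequences of reals. -/
def Rinf : Type := {f : ℕ → ℝ // ∃ N, ∀ n, N ≤ n → f n = 0}

instance : TopologicalSpace Rinf := by unfold Rinf; infer_instance

/-- The ordered configuration space of `n` points in `X`. -/
def ConfSp (n : ℕ) (X : Type) [TopologicalSpace X] : Type :=
  {f : Fin n → X // Function.Injective f}

instance (n : ℕ) (X : Type) [TopologicalSpace X] : TopologicalSpace (ConfSp n X) := by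
  unfold ConfSp; infer_instance

/-- The relation identifying configurations differing by a permutation of the labels. -/
def confSetoid (n : ℕ) (X : Type) [TopologicalSpace X] : Setoid (ConfSp n X) where
  r f g := ∃ e : Equiv.Perm (Fin n), f.1 ∘ e = g.1
  iseqv := by
    refine ⟨fun f => ⟨1, ?_⟩, ?_, ?_⟩
    · ext i; rfl
    · rintro f g ⟨e, h⟩
      exact ⟨e.symm, by rw [← h]; ext i; simp⟩
    · rintro f g h ⟨e, h1⟩ ⟨t2, h2⟩
      exact ⟨t2.trans e , by rw [← h2, ← h1]; rfl⟩

/-- The unordered configuration space of `n` points in `X`. -/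
def UConfSp (n : ℕ) (X : Type) [TopologicalSpace X] : Type :=
  Quotient (confSetoid n X)

instance (n : ℕ) (X : Type) [TopologicalSpace X] : TopologicalSpace (UConfSp n X) := by
  unfold UConfSp; infer_instance


lemma predAbove_castSucc_succAbove {p : ℕ} (i : Fin (p + 1)) (k : Fin p) :
    i.predAbove ((i.succAbove k).castSucc) = k.castSucc := by
  rcases lt_or_ge k.castSucc i with h | h
  · rw [Fin.succAbove_of_castSucc_lt _ _ h, Fin.predAbove_castSucc_of_le i k.castSucc h.le]
  · rw [Fin.succAbove_of_le_castSucc _ _ h, ← Fin.succ_castSucc,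
      Fin.predAbove_succ_of_le i k.castSucc h]

lemma predAbove_succ_succAbove {p : ℕ} (i : Fin (p + 1)) (k : Fin p) :
    i.predAbove ((i.succAbove k).succ) = k.succ := by
  rcases lt_or_ge k.castSucc i with h | h
  · have h' : k.succ ≤ i := by
      rw [Fin.le_def]; rw [Fin.lt_def] at h; simpa using h
    rw [Fin.succAbove_of_castSucc_lt _ _ h, Fin.succ_castSucc,
      Fin.predAbove_castSucc_of_le i k.succ h']
  · have h' : i ≤ k.succ := le_trans h (by rw [Fin.le_def]; simp)
    rw [Fin.succAbove_of_le_castSucc _ _ h, Fin.predAbove_succ_of_le i k.succ h']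

open scoped unitInterval

/-- An NDR-pair `(X, A)` over a base `B` (Definition of neighbourhood deformation
retract pairs in spaces over `B`). -/
def IsNDRPairOver {X B : Type} [TopologicalSpace X] [TopologicalSpace B]
    (A : Set X) (pr : C(X, B)) : Prop :=
  ∃ (u : C(X, I × B)) (h : C(X × I, X)),
    (∀ x, (u x).2 = pr x) ∧
    (∀ x, x ∈ A ↔ ((u x).1 : ℝ) = 0) ∧
    (∀ x, h (x, 0) = x) ∧
    (∀ a ∈ A, ∀ t, h (a, t) = a) ∧
    (∀ x, ((u x).1 : ℝ) < 1 → h (x, 1) ∈ A)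

/-- The cube `I^N`. -/
def cubeN (N : ℕ) : Type := Fin N → I

instance (N : ℕ) : TopologicalSpace (cubeN N) := by unfold cubeN; infer_instance

/-- The space of all finite unordered configurations in the cube `I^N`. -/
def ConfTot (N : ℕ) : Type := Σ n : ℕ, UConfSp n (cubeN N)

instance (N : ℕ) : TopologicalSpace (ConfTot N) := by unfold ConfTot; infer_instance

/-- The object space of the category `𝒞_N`: configurations together with a time. -/
def CObj (N : ℕ) : Type := ConfTot N × ℝ

instance (N : ℕ) : TopologicalSpace (CObj N) := by unfold CObj; infer_instance

/-- The morphism space of `𝒞_N`: triples `(t_x, t_y, φ)` with `t_x ≤ t_y` and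
`φ(t) = (z(t), t)` the graph of a path of configurations defined on `[t_x, t_y]`
(encoded as a globally defined path which is constant before `t_x` and after `t_y`). -/
def CMor (N : ℕ) : Type :=
  {m : (ℝ × ℝ) × C(ℝ, ConfTot N) //
    m.1.1 ≤ m.1.2 ∧ (∀ t ≤ m.1.1, m.2 t = m.2 m.1.1) ∧
      ∀ t, m.1.2 ≤ t → m.2 t = m.2 m.1.2}

instance (N : ℕ) : TopologicalSpace (CMor N) := by unfold CMor; infer_instance

/-- The embedding of objects as identity (zero length) morphisms. -/
def cIdent (N : ℕ) : C(CObj N, CMor N) :=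
  ⟨fun o => ⟨((o.2, o.2), ContinuousMap.const ℝ o.1), le_refl _, fun _ _ => rfl,
      fun _ _ => rfl⟩,
    Continuous.subtype_mk
      (((continuous_snd.prodMk continuous_snd)).prodMk
        (ContinuousMap.continuous_const'.comp continuous_fst)) _⟩

/-- The source-target map of `𝒞_N`. -/
def cEnds (N : ℕ) : C(CMor N, CObj N × CObj N) :=
  ⟨fun m => ((m.1.2 m.1.1.1, m.1.1.1), (m.1.2 m.1.1.2, m.1.1.2)),
    by
      have h1 : Continuous fun m : CMor N => m.1.2 := continuous_snd.comp continuous_subtype_val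
      have h2 : Continuous fun m : CMor N => m.1.1.1 :=
        continuous_fst.comp (continuous_fst.comp continuous_subtype_val)
      have h3 : Continuous fun m : CMor N => m.1.1.2 :=
        continuous_snd.comp (continuous_fst.comp continuous_subtype_val)
      exact ((continuous_eval.comp (h1.prodMk h2)).prodMk h2).prodMk
        ((continuous_eval.comp (h1.prodMk h3)).prodMk h3)⟩

/-- The space of `p`-simplices of the nerve of `𝒞_N`: a chain of `p` composable paths of
configurations is the same as a single path marked by `p+1` ordered times. -/
def CNerve (N p : ℕ) : Type :=
  {x : (Fin (p + 1) → ℝ) × C(ℝ, ConfTot N) //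
    Monotone x.1 ∧ (∀ t ≤ x.1 0, x.2 t = x.2 (x.1 0)) ∧
      ∀ t, x.1 (Fin.last p) ≤ t → x.2 t = x.2 (x.1 (Fin.last p))}

instance (N p : ℕ) : TopologicalSpace (CNerve N p) := by unfold CNerve; infer_instance

/-- The `i`-th degeneracy of the nerve of `𝒞_N`, repeating the `i`-th marked time. -/
def cnerveDegeneracy (N p : ℕ) (i : Fin (p + 1)) : C(CNerve N p, CNerve N (p + 1)) :=
  ⟨fun x => ⟨(fun k => x.1.1 (i.predAbove k), x.1.2), by
      refine ⟨x.2.1.comp (Fin.predAbove_right_monotone i), ?_, ?_⟩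
      · intro t ht
        simp only [show i.predAbove 0 = 0 from Fin.predAbove_right_zero] at ht ⊢
        exact x.2.2.1 t ht
      · intro t ht
        simp only [show i.predAbove (Fin.last (p + 1)) = Fin.last p from
          Fin.predAbove_right_last] at ht ⊢
        exact x.2.2.2 t ht⟩,
    by
      have hv : Continuous (Subtype.val :
          CNerve N p → (Fin (p + 1) → ℝ) × C(ℝ, ConfTot N)) := continuous_subtype_val
      exact Continuous.subtype_mk
        ((continuous_pi fun k => ((continuous_apply (i.predAbove k)).comp
            continuous_fst).comp hv).prodMk (continuous_snd.comp hv)) _⟩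

namespace Stmt13Helpers

open Set Topology

/-! ### Clamping helper -/

/-- Clamp a real number into `[lo, hi]`. -/
noncomputable def clamp (lo hi : ℝ) : C(ℝ, ℝ) :=
  ⟨fun t => min (max t lo) hi, by fun_prop⟩

lemma clamp_apply (lo hi t : ℝ) : clamp lo hi t = min (max t lo) hi := rfl

lemma clamp_of_le {lo hi t : ℝ} (h : lo ≤ hi) (ht : t ≤ lo) : clamp lo hi t = lo := by
  rw [clamp_apply, max_eq_right ht, min_eq_left h]

lemma clamp_of_ge {lo hi t : ℝ} (ht : hi ≤ t) : clamp lo hi t = hi := by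
  rw [clamp_apply, min_eq_right (le_trans ht (le_max_left _ _))]

lemma clamp_of_mem {lo hi t : ℝ} (h1 : lo ≤ t) (h2 : t ≤ hi) : clamp lo hi t = t := by
  rw [clamp_apply, max_eq_left h1, min_eq_left h2]

lemma le_clamp {lo hi : ℝ} (h : lo ≤ hi) (t : ℝ) : lo ≤ clamp lo hi t :=
  le_min (le_max_right _ _) h

lemma clamp_le (lo hi t : ℝ) : clamp lo hi t ≤ hi := min_le_right _ _

lemma continuous_clamp {α : Type*} [TopologicalSpace α] {f g : α → ℝ}
    (hf : Continuous f) (hg : Continuous g) : Continuous fun a => clamp (f a) (g a) := by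
  apply ContinuousMap.continuous_of_continuous_uncurry
  exact (continuous_snd.max (hf.comp continuous_fst)).min (hg.comp continuous_fst)

lemma continuous_comp_clamp {α Y : Type*} [TopologicalSpace α] [TopologicalSpace Y]
    {z : α → C(ℝ, Y)} {f g : α → ℝ} (hz : Continuous z) (hf : Continuous f)
    (hg : Continuous g) : Continuous fun a => (z a).comp (clamp (f a) (g a)) :=
  ContinuousMap.continuous_comp'.comp ((continuous_clamp hf hg).prodMk hz)

lemma comp_clamp_left {Y : Type*} [TopologicalSpace Y] (z : C(ℝ, Y)) {lo hi : ℝ}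
    (h : lo ≤ hi) : ∀ t ≤ lo, (z.comp (clamp lo hi)) t = (z.comp (clamp lo hi)) lo :=
  fun t ht => by
    simp only [ContinuousMap.comp_apply, clamp_of_le h ht, clamp_of_le h le_rfl]

lemma comp_clamp_right {Y : Type*} [TopologicalSpace Y] (z : C(ℝ, Y)) {lo hi : ℝ}
    (_ : lo ≤ hi) : ∀ t, hi ≤ t → (z.comp (clamp lo hi)) t = (z.comp (clamp lo hi)) hi :=
  fun t ht => by
    simp only [ContinuousMap.comp_apply, clamp_of_ge ht, clamp_of_ge le_rfl]

lemma comp_clamp_eq {Y : Type*} [TopologicalSpace Y] (z : C(ℝ, Y)) {lo hi : ℝ}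
    (h : lo ≤ hi) (h1 : ∀ t ≤ lo, z t = z lo) (h2 : ∀ t, hi ≤ t → z t = z hi) :
    z.comp (clamp lo hi) = z := by
  ext t
  rcases le_total t lo with ht | ht
  · rw [ContinuousMap.comp_apply, clamp_of_le h ht, ← h1 t ht]
  · rcases le_total hi t with ht' | ht'
    · rw [ContinuousMap.comp_apply, clamp_of_ge ht', ← h2 t ht']
    · rw [ContinuousMap.comp_apply, clamp_of_mem ht ht']

end Stmt13Helpers
namespace Stmt13Helpers

lemma mem_range_cIdent_iff {N : ℕ} (m : CMor N) :
    m ∈ Set.range (cIdent N) ↔ m.1.1.1 = m.1.1.2 := by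
  constructor
  · rintro ⟨o, rfl⟩
    rfl
  · intro h
    refine ⟨(m.1.2 m.1.1.1, m.1.1.1), Subtype.ext (Prod.ext ?_ ?_)⟩
    · exact Prod.ext rfl h
    · ext t
      show m.1.2 m.1.1.1 = m.1.2 t
      rcases le_total t m.1.1.1 with ht | ht
      · exact (m.2.2.1 t ht).symm
      · rw [h, ← m.2.2.2 t (h ▸ ht)]

/-- The new right endpoint after squeezing by parameter `s`. -/
noncomputable def newEnd (tx ty s : ℝ) : ℝ := clamp tx ty (ty - s * (ty - tx))

/-- The squeezing homotopy on morphisms. -/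
noncomputable def morSqueeze {N : ℕ} (m : CMor N) (s : ℝ) : CMor N :=
  ⟨((m.1.1.1, newEnd m.1.1.1 m.1.1.2 s), m.1.2.comp (clamp m.1.1.1 (newEnd m.1.1.1 m.1.1.2 s))),
    le_clamp m.2.1 _, comp_clamp_left _ (le_clamp m.2.1 _), comp_clamp_right _ (le_clamp m.2.1 _)⟩

lemma morSqueeze_zero {N : ℕ} (m : CMor N) : morSqueeze m 0 = m := by
  have hE : newEnd m.1.1.1 m.1.1.2 0 = m.1.1.2 := by
    unfold newEnd
    rw [zero_mul, sub_zero, clamp_of_ge le_rfl]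
  apply Subtype.ext
  apply Prod.ext
  · exact Prod.ext rfl hE
  · show m.1.2.comp (clamp m.1.1.1 (newEnd m.1.1.1 m.1.1.2 0)) = m.1.2
    rw [hE]
    exact comp_clamp_eq _ m.2.1 m.2.2.1 m.2.2.2

lemma morSqueeze_ident {N : ℕ} (o : CObj N) (s : ℝ) : morSqueeze (cIdent N o) s = cIdent N o := by
  apply Subtype.ext
  apply Prod.ext
  · exact Prod.ext rfl (le_antisymm (clamp_le _ _ _) (le_clamp le_rfl _))
  · ext t
    rfl

lemma morSqueeze_one_mem {N : ℕ} (m : CMor N) : morSqueeze m 1 ∈ Set.range (cIdent N) := by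
  rw [mem_range_cIdent_iff]
  show m.1.1.1 = newEnd m.1.1.1 m.1.1.2 1
  unfold newEnd
  rw [one_mul, sub_sub_cancel, clamp_of_mem le_rfl m.2.1]

lemma continuous_morSqueeze {N : ℕ} :
    Continuous fun ms : CMor N × unitInterval => morSqueeze ms.1 ms.2 := by
  have hm : Continuous fun ms : CMor N × unitInterval => ms.1.1 :=
    continuous_subtype_val.comp continuous_fst
  have htx : Continuous fun ms : CMor N × unitInterval => ms.1.1.1.1 := hm.fst.fst
  have hty : Continuous fun ms : CMor N × unitInterval => ms.1.1.1.2 := hm.fst.snd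
  have hz : Continuous fun ms : CMor N × unitInterval => ms.1.1.2 := hm.snd
  have hs : Continuous fun ms : CMor N × unitInterval => (ms.2 : ℝ) :=
    continuous_subtype_val.comp continuous_snd
  have hnew : Continuous fun ms : CMor N × unitInterval =>
      newEnd ms.1.1.1.1 ms.1.1.1.2 ms.2 := by
    simp only [newEnd, clamp_apply]
    exact ((hty.sub (hs.mul (hty.sub htx))).max htx).min hty
  exact Continuous.subtype_mk ((htx.prodMk hnew).prodMk (continuous_comp_clamp hz htx hnew)) _

lemma part1 (N : ℕ) : IsNDRPairOver (Set.range (cIdent N)) (cEnds N) := by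
  refine ⟨⟨fun m => (Set.projIcc 0 1 zero_le_one (m.1.1.2 - m.1.1.1), cEnds N m),
      (continuous_projIcc.comp ((continuous_subtype_val.fst.snd).sub
        continuous_subtype_val.fst.fst)).prodMk (cEnds N).continuous⟩,
    ⟨fun ms => morSqueeze ms.1 ms.2, continuous_morSqueeze⟩,
    fun m => rfl, ?_, ?_, ?_, ?_⟩
  · intro m
    rw [mem_range_cIdent_iff]
    show m.1.1.1 = m.1.1.2 ↔ ((Set.projIcc (0:ℝ) 1 zero_le_one (m.1.1.2 - m.1.1.1) : I) : ℝ) = 0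
    rw [Set.coe_projIcc]
    have hle := m.2.1
    constructor
    · intro h
      rw [← h, sub_self]
      simp
    · intro h
      by_contra hne
      have hd : 0 < m.1.1.2 - m.1.1.1 := sub_pos.2 (lt_of_le_of_ne hle hne)
      have h2 : (0 : ℝ) < min 1 (m.1.1.2 - m.1.1.1) := lt_min one_pos hd
      have h3 : min 1 (m.1.1.2 - m.1.1.1) ≤ 0 := h ▸ le_max_right 0 _
      linarith
  · intro m
    exact morSqueeze_zero m
  · rintro a ⟨o, rfl⟩ t
    exact morSqueeze_ident o t
  · intro m _
    exact morSqueeze_one_mem m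

end Stmt13Helpers
namespace Stmt13Helpers

variable {N p : ℕ}

/-- The retraction of the `i`-th degeneracy, dropping the time at index `i.castSucc`
and clamping the path accordingly. -/
noncomputable def qmap (N p : ℕ) (i : Fin (p + 1)) : C(CNerve N (p + 1), CNerve N p) :=
  ⟨fun y => ⟨(fun j => y.1.1 (i.castSucc.succAbove j),
      y.1.2.comp (clamp (y.1.1 (i.castSucc.succAbove 0))
        (y.1.1 (i.castSucc.succAbove (Fin.last p))))), by
    have hmono : Monotone fun j : Fin (p + 1) => y.1.1 (i.castSucc.succAbove j) :=
      y.2.1.comp (Fin.strictMono_succAbove _).monotone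
    have hle : y.1.1 (i.castSucc.succAbove 0) ≤ y.1.1 (i.castSucc.succAbove (Fin.last p)) :=
      hmono (Fin.zero_le _)
    exact ⟨hmono, comp_clamp_left _ hle, comp_clamp_right _ hle⟩⟩, by
    have hv : Continuous (Subtype.val :
        CNerve N (p + 1) → (Fin (p + 2) → ℝ) × C(ℝ, ConfTot N)) := continuous_subtype_val
    exact Continuous.subtype_mk
      ((continuous_pi fun j => (continuous_apply _).comp hv.fst).prodMk
        (continuous_comp_clamp hv.snd ((continuous_apply _).comp hv.fst)
          ((continuous_apply _).comp hv.fst))) _⟩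

lemma sigma_i (i : Fin (p + 1)) : i.castSucc.succAbove i = i.succ :=
  Fin.succAbove_of_le_castSucc _ _ le_rfl

lemma sigma_last (i : Fin (p + 1)) : i.castSucc.succAbove (Fin.last p) = Fin.last (p + 1) := by
  rw [Fin.succAbove_of_le_castSucc _ _ (Fin.castSucc_le_castSucc_iff.2 (Fin.le_last i)),
    Fin.succ_last]

lemma q_deg (i : Fin (p + 1)) (x : CNerve N p) :
    qmap N p i (cnerveDegeneracy N p i x) = x := by
  apply Subtype.ext
  apply Prod.ext
  · funext j
    exact congrArg x.1.1 (Fin.predAbove_succAbove i j)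
  · show x.1.2.comp (clamp (x.1.1 (i.predAbove (i.castSucc.succAbove 0)))
      (x.1.1 (i.predAbove (i.castSucc.succAbove (Fin.last p))))) = x.1.2
    rw [Fin.predAbove_succAbove, Fin.predAbove_succAbove]
    exact comp_clamp_eq _ (x.2.1 (Fin.zero_le _)) x.2.2.1 x.2.2.2

lemma deg_q (i : Fin (p + 1)) (y : CNerve N (p + 1))
    (hy : y.1.1 i.castSucc = y.1.1 i.succ) :
    cnerveDegeneracy N p i (qmap N p i y) = y := by
  have hlo : y.1.1 (i.castSucc.succAbove 0) = y.1.1 0 := by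
    rcases eq_or_ne i 0 with rfl | hi
    · rw [show (Fin.castSucc (0 : Fin (p + 1))).succAbove 0 = (0 : Fin (p + 1)).succ from
        Fin.succAbove_of_le_castSucc _ _ le_rfl, ← hy, Fin.castSucc_zero]
    · rw [Fin.succAbove_of_castSucc_lt _ _
        (Fin.castSucc_lt_castSucc_iff.2 (Fin.pos_of_ne_zero hi)), Fin.castSucc_zero]
  have hhi : y.1.1 (i.castSucc.succAbove (Fin.last p)) = y.1.1 (Fin.last (p + 1)) :=
    congrArg y.1.1 (sigma_last i)
  apply Subtype.ext
  apply Prod.ext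
  · funext k
    show y.1.1 (i.castSucc.succAbove (i.predAbove k)) = y.1.1 k
    rcases eq_or_ne k i.castSucc with rfl | hk
    · rw [Fin.predAbove_castSucc_self, sigma_i]
      exact hy.symm
    · rw [Fin.succAbove_predAbove hk]
  · show y.1.2.comp (clamp (y.1.1 (i.castSucc.succAbove 0))
      (y.1.1 (i.castSucc.succAbove (Fin.last p)))) = y.1.2
    rw [hlo, hhi]
    exact comp_clamp_eq _ (y.2.1 (Fin.zero_le _)) y.2.2.1 y.2.2.2

lemma deg_mem (i : Fin (p + 1)) (x : CNerve N p) :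
    (cnerveDegeneracy N p i x).1.1 i.castSucc = (cnerveDegeneracy N p i x).1.1 i.succ := by
  show x.1.1 (i.predAbove i.castSucc) = x.1.1 (i.predAbove i.succ)
  rw [Fin.predAbove_castSucc_self, Fin.predAbove_succ_self]

lemma range_deg (i : Fin (p + 1)) : Set.range (cnerveDegeneracy N p i) =
    {y : CNerve N (p + 1) | y.1.1 i.castSucc = y.1.1 i.succ} := by
  ext y
  constructor
  · rintro ⟨x, rfl⟩
    exact deg_mem i x
  · intro hy
    exact ⟨qmap N p i y, deg_q i y hy⟩

lemma deg_closedEmbedding (i : Fin (p + 1)) :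
    Topology.IsClosedEmbedding (cnerveDegeneracy N p i) := by
  constructor
  · apply Topology.IsEmbedding.of_comp (map_continuous _) (map_continuous (qmap N p i))
    rw [show ⇑(qmap N p i) ∘ ⇑(cnerveDegeneracy N p i) = id from funext (q_deg i)]
    exact Topology.IsEmbedding.id
  · rw [range_deg]
    have h1 : Continuous fun y : CNerve N (p + 1) => y.1.1 := continuous_subtype_val.fst
    exact isClosed_eq ((continuous_apply _).comp h1) ((continuous_apply _).comp h1)

/-- The times of the squeezing homotopy on the nerve. -/
noncomputable def sqTimes (i : Fin (p + 1)) (y : CNerve N (p + 1)) (s : ℝ) : Fin (p + 2) → ℝ :=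
  fun k => if k = i.succ then clamp (y.1.1 i.castSucc) (y.1.1 i.succ) (y.1.1 i.succ - s)
    else y.1.1 k

lemma sqTimes_mono (i : Fin (p + 1)) (y : CNerve N (p + 1)) (s : ℝ) :
    Monotone (sqTimes i y s) := by
  have hcs : y.1.1 i.castSucc ≤ y.1.1 i.succ := y.2.1 (Fin.castSucc_lt_succ : i.castSucc < i.succ).le
  intro a b hab
  unfold sqTimes
  by_cases ha : a = i.succ <;> by_cases hb : b = i.succ
  · rw [if_pos ha, if_pos hb]
  · rw [if_pos ha, if_neg hb]
    subst ha
    exact le_trans (clamp_le _ _ _) (y.2.1 hab)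
  · rw [if_neg ha, if_pos hb]
    subst hb
    have hab' : a ≤ i.castSucc := Fin.le_castSucc_iff.2 (lt_of_le_of_ne hab ha)
    exact le_trans (y.2.1 hab') (le_clamp hcs _)
  · rw [if_neg ha, if_neg hb]
    exact y.2.1 hab

/-- The squeezing homotopy on the nerve. -/
noncomputable def sq (i : Fin (p + 1)) (y : CNerve N (p + 1)) (s : ℝ) : CNerve N (p + 1) :=
  ⟨(sqTimes i y s, y.1.2.comp (clamp (sqTimes i y s 0) (sqTimes i y s (Fin.last (p + 1))))),
    sqTimes_mono i y s,
    comp_clamp_left _ (sqTimes_mono i y s (Fin.zero_le _)),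
    comp_clamp_right _ (sqTimes_mono i y s (Fin.zero_le _))⟩

lemma sq_eq_of_times {i : Fin (p + 1)} {y : CNerve N (p + 1)} {s : ℝ}
    (h : sqTimes i y s = y.1.1) : sq i y s = y := by
  apply Subtype.ext
  apply Prod.ext
  · exact h
  · show y.1.2.comp (clamp (sqTimes i y s 0) (sqTimes i y s (Fin.last (p + 1)))) = y.1.2
    rw [congrFun h 0, congrFun h (Fin.last (p + 1))]
    exact comp_clamp_eq _ (y.2.1 (Fin.zero_le _)) y.2.2.1 y.2.2.2

lemma sq_zero (i : Fin (p + 1)) (y : CNerve N (p + 1)) : sq i y 0 = y := by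
  apply sq_eq_of_times
  funext k
  unfold sqTimes
  by_cases hk : k = i.succ
  · rw [if_pos hk, sub_zero, clamp_of_ge le_rfl, hk]
  · rw [if_neg hk]

lemma sq_d_mem (i : Fin (p + 1)) (y : CNerve N (p + 1)) :
    sq i y (y.1.1 i.succ - y.1.1 i.castSucc) ∈ Set.range (cnerveDegeneracy N p i) := by
  rw [range_deg]
  show sqTimes i y _ i.castSucc = sqTimes i y _ i.succ
  unfold sqTimes
  rw [if_neg (Fin.castSucc_lt_succ : i.castSucc < i.succ).ne, if_pos rfl, sub_sub_cancel,
    clamp_of_mem le_rfl (y.2.1 (Fin.castSucc_lt_succ : i.castSucc < i.succ).le)]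

lemma continuous_sq {α : Type*} [TopologicalSpace α] {i : Fin (p + 1)}
    {f : α → CNerve N (p + 1)} {s : α → ℝ} (hf : Continuous f) (hs : Continuous s) :
    Continuous fun a => sq i (f a) (s a) := by
  have hv : Continuous fun a => (f a).1 := continuous_subtype_val.comp hf
  have happ : ∀ k, Continuous fun a => (f a).1.1 k := fun k => (continuous_apply k).comp hv.fst
  have hT : ∀ k, Continuous fun a => sqTimes i (f a) (s a) k := by
    intro k
    by_cases hk : k = i.succ
    · simp only [sqTimes, if_pos hk, clamp_apply]
      exact (((happ _).sub hs).max (happ _)).min (happ _)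
    · simp only [sqTimes, if_neg hk]
      exact happ k
  exact Continuous.subtype_mk
    ((continuous_pi hT).prodMk (continuous_comp_clamp hv.snd (hT 0) (hT _))) _

lemma deg_hep (N p : ℕ) (i : Fin (p + 1)) :
    IsClosedHurewiczCofibration (cnerveDegeneracy N p i) := by
  refine ⟨deg_closedEmbedding i, ?_⟩
  intro Z _ g H hH
  classical
  set d : CNerve N (p + 1) → ℝ := fun y => y.1.1 i.succ - y.1.1 i.castSucc with hd
  have h1 : Continuous fun y : CNerve N (p + 1) => y.1.1 := continuous_subtype_val.fst
  have hdc : Continuous d :=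
    ((continuous_apply _).comp h1).sub ((continuous_apply _).comp h1)
  have hd0 : ∀ y, 0 ≤ d y := fun y => sub_nonneg.2 (y.2.1 (Fin.castSucc_lt_succ : i.castSucc < i.succ).le)
  have key : ∀ y : CNerve N (p + 1), g (sq i y (d y)) = H (qmap N p i (sq i y (d y)), 0) := by
    intro y
    have hmem := sq_d_mem i y
    rw [range_deg] at hmem
    rw [hH (qmap N p i (sq i y (d y))), deg_q i _ hmem]
  refine ⟨⟨fun yt => if (yt.2 : ℝ) ≤ d yt.1 then g (sq i yt.1 yt.2)
      else H (qmap N p i (sq i yt.1 (d yt.1)),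
        Set.projIcc 0 1 zero_le_one ((yt.2 : ℝ) - d yt.1)), ?_⟩, ?_, ?_⟩
  · apply Continuous.if_le
    · exact g.continuous.comp (continuous_sq continuous_fst
        (continuous_subtype_val.comp continuous_snd))
    · exact H.continuous.comp (((qmap N p i).continuous.comp
        (continuous_sq continuous_fst (hdc.comp continuous_fst))).prodMk
        (continuous_projIcc.comp ((continuous_subtype_val.comp continuous_snd).sub
          (hdc.comp continuous_fst))))
    · exact continuous_subtype_val.comp continuous_snd
    · exact hdc.comp continuous_fst
    · intro yt heq
      have h0 : Set.projIcc (0 : ℝ) 1 zero_le_one 0 = 0 := by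
        apply Subtype.ext
        rw [Set.coe_projIcc]
        norm_num
      rw [heq, sub_self, h0]
      exact key yt.1
  · intro x
    simp only [ContinuousMap.coe_mk]
    rw [if_pos (by rw [show ((0 : unitInterval) : ℝ) = 0 from rfl]; exact hd0 x)]
    rw [show ((0 : unitInterval) : ℝ) = 0 from rfl, sq_zero]
  · intro a t
    have hda : d (cnerveDegeneracy N p i a) = 0 := by
      show a.1.1 (i.predAbove i.succ) - a.1.1 (i.predAbove i.castSucc) = 0
      rw [Fin.predAbove_succ_self, Fin.predAbove_castSucc_self, sub_self]
    simp only [ContinuousMap.coe_mk]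
    by_cases ht : (t : ℝ) ≤ d (cnerveDegeneracy N p i a)
    · have ht0 : t = 0 := by
        apply Subtype.ext
        exact le_antisymm (by rw [hda] at ht; exact ht) t.2.1
      subst ht0
      rw [if_pos ht, show ((0 : unitInterval) : ℝ) = 0 from rfl, sq_zero]
      exact (hH a).symm
    · rw [if_neg ht, hda, sub_zero, sq_zero, q_deg, Set.projIcc_val]

end Stmt13Helpers

/-- The topological category `𝒞_N` of paths of configurations in `I^N` is well-pointed:
the pair `(Mor 𝒞_N, Ob 𝒞_N)` is an NDR-pair over `Ob 𝒞_N × Ob 𝒞_N`, and hence the nerve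
of `𝒞_N` is a good simplicial space (all degeneracies are closed Hurewicz cofibrations). -/
theorem stmt13 (N : ℕ) (hN : 3 ≤ N) :
    IsNDRPairOver (Set.range (cIdent N)) (cEnds N) ∧
      ∀ (p : ℕ) (i : Fin (p + 1)),
        IsClosedHurewiczCofibration (cnerveDegeneracy N p i) := by
  constructor
  · exact Stmt13Helpers.part1 N
  · intro p i
    exact Stmt13Helpers.deg_hep N p i
end
end
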